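/- Let n ≥ 2, λ ∈ ℝ, and b ∈ ℝⁿ with |b| = 1, and define e(x) = ((1 − |x|²)/|x − b|²)^{(n−1+iλ)/2} for x in the open unit ball of ℝⁿ (complex power of a positive real base). Then for every x with |x| < 1, (1 − |x|²)·[(1 − |x|²)·Σ_{j=1}^n ∂²e/∂x_j²(x) + (2n − 4)·Σ_{j=1}^n x_j·∂e/∂x_j(x)] = −(λ² + (n−1)²)·e(x). -/

import Mathlib

/-- The plane wave `e_{λ,b}(x) = ((1 - |x|²)/|x - b|²)^{(n-1+iλ)/2}` on the unit ball
of `ℝⁿ`. -/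
noncomputable def pwBall (n : ℕ) (lam : ℝ) (b x : EuclideanSpace ℝ (Fin n)) : ℂ :=
  (((1 - ‖x‖ ^ 2) / ‖x - b‖ ^ 2 : ℝ) : ℂ) ^ (((n : ℂ) - 1 + Complex.I * (lam : ℂ)) / 2)

/-- Partial derivative `∂f/∂x_j` of `f : ℝⁿ → ℂ`. -/
noncomputable def pd (n : ℕ) (j : Fin n) (f : EuclideanSpace ℝ (Fin n) → ℂ)
    (x : EuclideanSpace ℝ (Fin n)) : ℂ :=
  deriv (fun s : ℝ => f (x + s • EuclideanSpace.single j (1 : ℝ))) 0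

/-!
The plane wave is `K ^ μ` with `K x = (1 - |x|²)/|x - b|²` and `μ = (n - 1 + iλ)/2`. Along a
coordinate line `K` is a quotient of two quadratics, so the chain rule gives
`∂ⱼ(K^μ) = μ K^(μ-1) ∂ⱼK` and `∂ⱼ²(K^μ) = μ(μ-1) K^(μ-2) (∂ⱼK)² + μ K^(μ-1) ∂ⱼ²K`, where
`∂ⱼ²K = -(4 (x - b)ⱼ ∂ⱼK + 2 (K + 1)) / |x - b|²`. Because `|b| = 1`, the gradient satisfies
`|∇K| = 2/|x - b|²`, `⟨x - b, ∇K⟩ = -(K + 1)` and `⟨x, ∇K⟩ = K (K + 1) - 2/|x - b|²`. Summing over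
`j`, the operator maps `K^μ` to `4μ(μ - (n - 1)) K^μ`, and `4μ(μ - (n - 1)) = -(λ² + (n - 1)²)`.
-/

open Complex Filter Topology RealInnerProductSpace

theorem HasDerivAt.ofReal_cpow_const {f : ℝ → ℝ} {f' t : ℝ} (hf : HasDerivAt f f' t)
    (hpos : 0 < f t) (μ : ℂ) :
    HasDerivAt (fun s => (f s : ℂ) ^ μ) (μ * (f t : ℂ) ^ (μ - 1) * f') t := by
  simpa [mul_assoc, Function.comp_def] using
    (hasStrictDerivAt_cpow_const (c := μ) (ofReal_mem_slitPlane.2 hpos)).hasDerivAt.comp t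
      hf.ofReal_comp

theorem deriv_deriv_ofReal_cpow_const {f f' : ℝ → ℝ} {f'' t : ℝ}
    (hf : ∀ᶠ s in 𝓝 t, HasDerivAt f (f' s) s) (hf' : HasDerivAt f' f'' t) (hpos : 0 < f t)
    (μ : ℂ) :
    deriv (deriv fun s => (f s : ℂ) ^ μ) t =
      μ * (μ - 1) * (f t : ℂ) ^ (μ - 2) * (f' t : ℂ) ^ 2 + μ * (f t : ℂ) ^ (μ - 1) * f'' := by
  have hpos_near : ∀ᶠ s in 𝓝 t, 0 < f s :=
    hf.self_of_nhds.continuousAt.eventually (lt_mem_nhds hpos)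
  have hderiv : deriv (fun s => (f s : ℂ) ^ μ) =ᶠ[𝓝 t]
      fun s => μ * (f s : ℂ) ^ (μ - 1) * f' s := by
    filter_upwards [hf, hpos_near] with s hs hs_pos
    exact (hs.ofReal_cpow_const hs_pos μ).deriv
  rw [hderiv.deriv_eq]
  refine (((hf.self_of_nhds.ofReal_cpow_const hpos (μ - 1)).const_mul μ).mul
    hf'.ofReal_comp).deriv.trans ?_
  rw [sub_sub, one_add_one_eq_two]
  ring

theorem hasDerivAt_quadratic_div_quadratic (u v a c s : ℝ) (hs : v + 2 * c * s + s ^ 2 ≠ 0) :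
    HasDerivAt (fun s => (u - 2 * a * s - s ^ 2) / (v + 2 * c * s + s ^ 2))
      ((-2 * (v * a + u * c) - 2 * (u + v) * s + 2 * (a - c) * s ^ 2) /
        (v + 2 * c * s + s ^ 2) ^ 2) s := by
  have hnum : HasDerivAt (fun s => u - 2 * a * s - s ^ 2) (-2 * a - 2 * s) s :=
    ((((hasDerivAt_id' s).const_mul (2 * a)).const_sub u).sub (hasDerivAt_pow 2 s)).congr_deriv
      (by ring)
  have hden : HasDerivAt (fun s => v + 2 * c * s + s ^ 2) (2 * c + 2 * s) s :=
    ((((hasDerivAt_id' s).const_mul (2 * c)).const_add v).add (hasDerivAt_pow 2 s)).congr_deriv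
      (by ring)
  refine (hnum.div hden hs).congr_deriv ?_
  field_simp
  ring

theorem hasDerivAt_quadratic_div_quadratic_deriv_zero (u v a c : ℝ) (hv : v ≠ 0) :
    HasDerivAt (fun s => (-2 * (v * a + u * c) - 2 * (u + v) * s + 2 * (a - c) * s ^ 2) /
        (v + 2 * c * s + s ^ 2) ^ 2)
      ((8 * c * (v * a + u * c) - 2 * v * (u + v)) / v ^ 3) 0 := by
  have hnum : HasDerivAt (fun s => -2 * (v * a + u * c) - 2 * (u + v) * s + 2 * (a - c) * s ^ 2)
      (-2 * (u + v)) 0 :=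
    ((((hasDerivAt_id' (0 : ℝ)).const_mul (2 * (u + v))).const_sub
      (-2 * (v * a + u * c))).add ((hasDerivAt_pow 2 (0 : ℝ)).const_mul (2 * (a - c)))).congr_deriv
      (by ring)
  have hden : HasDerivAt (fun s => (v + 2 * c * s + s ^ 2) ^ 2) (4 * c * v) 0 :=
    (((((hasDerivAt_id' (0 : ℝ)).const_mul (2 * c)).const_add v).add
      (hasDerivAt_pow 2 (0 : ℝ))).pow 2).congr_deriv (by simp; ring)
  refine (hnum.div hden (by simpa using hv)).congr_deriv ?_
  norm_num
  field_simp
  ring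

theorem pd_pd_eq_deriv_deriv {n : ℕ} (j : Fin n) (f : EuclideanSpace ℝ (Fin n) → ℂ)
    (x : EuclideanSpace ℝ (Fin n)) :
    pd n j (pd n j f) x =
      deriv (deriv fun s : ℝ => f (x + s • EuclideanSpace.single j (1 : ℝ))) 0 := by
  unfold pd
  congr 1
  funext s
  simp only [add_assoc, ← add_smul]
  simpa using deriv_comp_const_add (fun t : ℝ => f (x + t • EuclideanSpace.single j (1 : ℝ))) s 0

theorem norm_add_smul_single_sq {n : ℕ} (y : EuclideanSpace ℝ (Fin n)) (j : Fin n) (s : ℝ) :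
    ‖y + s • EuclideanSpace.single j (1 : ℝ)‖ ^ 2 = ‖y‖ ^ 2 + 2 * y j * s + s ^ 2 := by
  rw [norm_add_sq_real, inner_smul_right, EuclideanSpace.inner_single_right, norm_smul]
  simp only [Real.ringHom_apply, one_mul, Real.norm_eq_abs, PiLp.norm_single, norm_one, mul_one,
    sq_abs]
  ring

theorem sum_mul_eq_inner {ι : Type*} [Fintype ι] (x y : EuclideanSpace ℝ ι) :
    ∑ j, x j * y j = ⟪x, y⟫ := by
  simp [PiLp.inner_apply, mul_comm]

/-- `exp (2⟨x, b⟩)` for Helgason's horocyclic bracket `⟨x, b⟩` on the ball; its `(n - 1)`-th power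
is the Poisson kernel. -/
noncomputable def horoKernel {n : ℕ} (b x : EuclideanSpace ℝ (Fin n)) : ℝ :=
  (1 - ‖x‖ ^ 2) / ‖x - b‖ ^ 2

noncomputable def horoKernelGrad {n : ℕ} (b x : EuclideanSpace ℝ (Fin n)) :
    EuclideanSpace ℝ (Fin n) :=
  (-2 / ‖x - b‖ ^ 4) • (‖x - b‖ ^ 2 • x + (1 - ‖x‖ ^ 2) • (x - b))

section Derivatives

variable {n : ℕ} {b x : EuclideanSpace ℝ (Fin n)}

theorem horoKernel_pos (hx : ‖x‖ < 1) (hxb : x ≠ b) : 0 < horoKernel b x :=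
  div_pos (by nlinarith [norm_nonneg x]) (by positivity [sub_ne_zero.2 hxb])

theorem horoKernel_add_smul_single (j : Fin n) (s : ℝ) :
    horoKernel b (x + s • EuclideanSpace.single j (1 : ℝ)) =
      (1 - ‖x‖ ^ 2 - 2 * x j * s - s ^ 2) / (‖x - b‖ ^ 2 + 2 * (x - b) j * s + s ^ 2) := by
  rw [horoKernel, add_sub_right_comm, norm_add_smul_single_sq, norm_add_smul_single_sq]
  ring

theorem horoKernelGrad_apply (j : Fin n) :
    horoKernelGrad b x j = -2 * (‖x - b‖ ^ 2 * x j + (1 - ‖x‖ ^ 2) * (x - b) j) / ‖x - b‖ ^ 4 := by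
  simp only [horoKernelGrad, smul_add, PiLp.add_apply, PiLp.smul_apply, smul_eq_mul,
    PiLp.sub_apply]
  ring

theorem pd_cpow_horoKernel (μ : ℂ) (hx : ‖x‖ < 1) (hxb : x ≠ b) (j : Fin n) :
    pd n j (fun y => (horoKernel b y : ℂ) ^ μ) x =
      μ * (horoKernel b x : ℂ) ^ (μ - 1) * (horoKernelGrad b x j : ℂ) := by
  have hv : ‖x - b‖ ≠ 0 := norm_ne_zero_iff.2 (sub_ne_zero.2 hxb)
  have h := (hasDerivAt_quadratic_div_quadratic (1 - ‖x‖ ^ 2) (‖x - b‖ ^ 2) (x j) ((x - b) j) 0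
    (by simpa using hv)).ofReal_cpow_const (by simpa [horoKernel] using horoKernel_pos hx hxb) μ
  simp only [pd, horoKernel_add_smul_single]
  rw [h.deriv, horoKernelGrad_apply]
  congr 2
  · simp [horoKernel]
  · norm_num
    ring

theorem pd_pd_cpow_horoKernel (μ : ℂ) (hx : ‖x‖ < 1) (hxb : x ≠ b) (j : Fin n) :
    pd n j (pd n j fun y => (horoKernel b y : ℂ) ^ μ) x =
      μ * (μ - 1) * (horoKernel b x : ℂ) ^ (μ - 2) * (horoKernelGrad b x j : ℂ) ^ 2 +
        μ * (horoKernel b x : ℂ) ^ (μ - 1) *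
          ((-(4 * (x - b) j * horoKernelGrad b x j + 2 * (horoKernel b x + 1)) / ‖x - b‖ ^ 2 :
            ℝ) : ℂ) := by
  have hv : ‖x - b‖ ≠ 0 := norm_ne_zero_iff.2 (sub_ne_zero.2 hxb)
  have hden : ∀ᶠ s in 𝓝 (0 : ℝ), ‖x - b‖ ^ 2 + 2 * (x - b) j * s + s ^ 2 ≠ 0 :=
    (by fun_prop : Continuous fun s : ℝ => ‖x - b‖ ^ 2 + 2 * (x - b) j * s + s ^ 2).continuousAt
      |>.eventually_ne (by simpa using hv)
  rw [pd_pd_eq_deriv_deriv]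
  simp only [horoKernel_add_smul_single]
  rw [deriv_deriv_ofReal_cpow_const
    (hden.mono fun s hs => hasDerivAt_quadratic_div_quadratic _ _ _ _ s hs)
    (hasDerivAt_quadratic_div_quadratic_deriv_zero _ _ _ _ (by simpa using hv))
    (by simpa [horoKernel] using horoKernel_pos hx hxb),
    horoKernelGrad_apply]
  simp only [horoKernel]
  norm_num
  have hvC : (‖x - b‖ : ℂ) ≠ 0 := by exact_mod_cast hv
  congr 2
  · congr 1
    ring
  · field_simp
    ring

end Derivatives

section Identities

variable {n : ℕ} {b x : EuclideanSpace ℝ (Fin n)}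

theorem norm_sub_sq_of_norm_eq_one (hb : ‖b‖ = 1) : ‖x - b‖ ^ 2 = ‖x‖ ^ 2 - 2 * ⟪x, b⟫ + 1 := by
  rw [norm_sub_sq_real, hb, one_pow]

theorem inner_horoKernelGrad (hb : ‖b‖ = 1) (hxb : x ≠ b) :
    ⟪x, horoKernelGrad b x⟫ = horoKernel b x * (horoKernel b x + 1) - 2 / ‖x - b‖ ^ 2 := by
  have hv : ‖x‖ ^ 2 - 2 * ⟪x, b⟫ + 1 ≠ 0 := by
    rw [← norm_sub_sq_of_norm_eq_one hb]; positivity [sub_ne_zero.2 hxb]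
  simp only [horoKernelGrad, horoKernel, real_inner_smul_right, inner_add_right, inner_sub_right,
    real_inner_self_eq_norm_sq, show ‖x - b‖ ^ 4 = (‖x - b‖ ^ 2) ^ 2 by ring,
    norm_sub_sq_of_norm_eq_one hb]
  field_simp
  ring

theorem inner_sub_horoKernelGrad (hb : ‖b‖ = 1) (hxb : x ≠ b) :
    ⟪x - b, horoKernelGrad b x⟫ = -(horoKernel b x + 1) := by
  have hv : ‖x‖ ^ 2 - 2 * ⟪x, b⟫ + 1 ≠ 0 := by
    rw [← norm_sub_sq_of_norm_eq_one hb]; positivity [sub_ne_zero.2 hxb]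
  simp only [horoKernelGrad, horoKernel, real_inner_smul_right, inner_add_right, inner_sub_right,
    inner_sub_left, real_inner_self_eq_norm_sq, real_inner_comm x b, hb,
    show ‖x - b‖ ^ 4 = (‖x - b‖ ^ 2) ^ 2 by ring, norm_sub_sq_of_norm_eq_one hb]
  field_simp
  ring

theorem norm_horoKernelGrad_sq (hb : ‖b‖ = 1) (hxb : x ≠ b) :
    ‖horoKernelGrad b x‖ ^ 2 = 4 / ‖x - b‖ ^ 4 := by
  have hv : ‖x - b‖ ≠ 0 := norm_ne_zero_iff.2 (sub_ne_zero.2 hxb)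
  rw [← real_inner_self_eq_norm_sq]
  nth_rw 1 [horoKernelGrad]
  rw [real_inner_smul_left, inner_add_left, real_inner_smul_left, real_inner_smul_left,
    inner_horoKernelGrad hb hxb, inner_sub_horoKernelGrad hb hxb, horoKernel]
  field_simp
  ring

end Identities

theorem cpow_horoKernel_eigen {n : ℕ} {b x : EuclideanSpace ℝ (Fin n)} (μ : ℂ) (hb : ‖b‖ = 1)
    (hx : ‖x‖ < 1) :
    ((1 - ‖x‖ ^ 2 : ℝ) : ℂ) *
        (((1 - ‖x‖ ^ 2 : ℝ) : ℂ) * ∑ j, pd n j (pd n j fun y => (horoKernel b y : ℂ) ^ μ) x +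
          ((2 * (n : ℝ) - 4 : ℝ) : ℂ) *
            ∑ j, ((x j : ℝ) : ℂ) * pd n j (fun y => (horoKernel b y : ℂ) ^ μ) x) =
      4 * μ * (μ - (n - 1)) * (horoKernel b x : ℂ) ^ μ := by
  have hxb : x ≠ b := by rintro rfl; exact hx.ne hb
  have hv : ‖x - b‖ ≠ 0 := norm_ne_zero_iff.2 (sub_ne_zero.2 hxb)
  have hK := horoKernel_pos hx hxb
  set K := horoKernel b x with hK_def
  set g := horoKernelGrad b x
  have hsum_first : ∑ j, ((x j : ℝ) : ℂ) * (μ * (K : ℂ) ^ (μ - 1) * (g j : ℂ)) =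
      μ * (K : ℂ) ^ (μ - 1) * (⟪x, g⟫ : ℂ) := by
    rw [← sum_mul_eq_inner, Complex.ofReal_sum, Finset.mul_sum]
    push_cast
    exact Finset.sum_congr rfl fun j _ => by ring
  have hsum_second : ∑ j, (μ * (μ - 1) * (K : ℂ) ^ (μ - 2) * (g j : ℂ) ^ 2 +
      μ * (K : ℂ) ^ (μ - 1) * ((-(4 * (x - b) j * g j + 2 * (K + 1)) / ‖x - b‖ ^ 2 : ℝ) : ℂ)) =
      μ * (μ - 1) * (K : ℂ) ^ (μ - 2) * (‖g‖ ^ 2 : ℝ) +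
        μ * (K : ℂ) ^ (μ - 1) * ((-(4 * ⟪x - b, g⟫ + 2 * n * (K + 1)) / ‖x - b‖ ^ 2 : ℝ) : ℂ) := by
    have hlap : ∑ j, -(4 * (x - b) j * g j + 2 * (K + 1)) / ‖x - b‖ ^ 2 =
        -(4 * ⟪x - b, g⟫ + 2 * n * (K + 1)) / ‖x - b‖ ^ 2 := by
      rw [← Finset.sum_div, ← sum_mul_eq_inner]
      simp [Finset.sum_add_distrib, Finset.mul_sum, mul_assoc]
      ring
    rw [Finset.sum_add_distrib, ← Finset.mul_sum, ← Finset.mul_sum, ← hlap,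
      EuclideanSpace.real_norm_sq_eq g]
    push_cast
    rfl
  simp_rw [pd_pd_cpow_horoKernel μ hx hxb, pd_cpow_horoKernel μ hx hxb]
  rw [hsum_first, hsum_second, inner_horoKernelGrad hb hxb, inner_sub_horoKernelGrad hb hxb,
    norm_horoKernelGrad_sq hb hxb]
  have hu : 1 - ‖x‖ ^ 2 = K * ‖x - b‖ ^ 2 := by simp only [K, horoKernel]; field_simp
  have hKC : (K : ℂ) ≠ 0 := by exact_mod_cast hK.ne'
  have hvC : (‖x - b‖ : ℂ) ≠ 0 := by exact_mod_cast hv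
  rw [← hK_def, hu, Complex.cpow_sub _ _ hKC, Complex.cpow_sub _ _ hKC, Complex.cpow_one,
    show (2 : ℂ) = (2 : ℕ) by norm_num, Complex.cpow_natCast]
  push_cast
  field_simp
  ring

theorem stmt18_general (n : ℕ) (lam : ℝ) (b : EuclideanSpace ℝ (Fin n))
    (hb : ‖b‖ = 1) (x : EuclideanSpace ℝ (Fin n)) (hx : ‖x‖ < 1) :
    ((1 - ‖x‖ ^ 2 : ℝ) : ℂ) *
        (((1 - ‖x‖ ^ 2 : ℝ) : ℂ) *
            (∑ j : Fin n, pd n j (pd n j (pwBall n lam b)) x) +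
          ((2 * (n : ℝ) - 4 : ℝ) : ℂ) *
            (∑ j : Fin n, ((x j : ℝ) : ℂ) * pd n j (pwBall n lam b) x))
      = -(((lam : ℂ)) ^ 2 + ((n : ℂ) - 1) ^ 2) * pwBall n lam b x := by
  have hpw : pwBall n lam b =
      fun y => (horoKernel b y : ℂ) ^ (((n : ℂ) - 1 + I * lam) / 2) := rfl
  rw [hpw, cpow_horoKernel_eigen _ hb hx]
  linear_combination (lam : ℂ) ^ 2 * (horoKernel b x : ℂ) ^ (((n : ℂ) - 1 + I * lam) / 2) * I_sq

/-- On the real hyperbolic `n`-space realized as the unit ball of `ℝⁿ`,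
the plane wave `e(x) = ((1-|x|²)/|x-b|²)^{(n-1+iλ)/2}` satisfies
`(1-|x|²)·[(1-|x|²)·Σ_j ∂²e/∂x_j² + (2n-4)·Σ_j x_j·∂e/∂x_j] = -(λ²+(n-1)²)·e`. -/
theorem stmt18 (n : ℕ) (hn : 2 ≤ n) (lam : ℝ) (b : EuclideanSpace ℝ (Fin n))
    (hb : ‖b‖ = 1) (x : EuclideanSpace ℝ (Fin n)) (hx : ‖x‖ < 1) :
    ((1 - ‖x‖ ^ 2 : ℝ) : ℂ) *
        (((1 - ‖x‖ ^ 2 : ℝ) : ℂ) *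
            (∑ j : Fin n, pd n j (pd n j (pwBall n lam b)) x) +
          ((2 * (n : ℝ) - 4 : ℝ) : ℂ) *
            (∑ j : Fin n, ((x j : ℝ) : ℂ) * pd n j (pwBall n lam b) x))
      = -(((lam : ℂ)) ^ 2 + ((n : ℂ) - 1) ^ 2) * pwBall n lam b x :=
  stmt18_general n lam b hb x hx
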